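/- arXiv:2412.01540 — 4 statements merged into one kernel-verified Lean document; each statement's English description precedes it below -/
import Mathlib

section
/- Let G = (V,E) be a graph and Y ⊆ E a set of edges satisfying: (i) for every edge-triangle {α,β,γ} of G, |Y ∩ {α,β,γ}| ≥ 2 implies {α,β,γ} ⊆ Y; and (ii) for every pair of edges α,β forming a chordless path of length 2, |Y ∩ {α,β}| ≤ 1. Then the connected components of the graph (V,Y) are cliques of G, and the resulting partition Π of V is a clique packing of G with E(Π) = Y. -/
open SimpleGraph

/-- Three edges of `G` forming a triangle. -/
def IsEdgeTriangle {V : Type*} (G : SimpleGraph V) (α β γ : Sym2 V) : Prop :=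
  ∃ a b c : V, G.Adj a b ∧ G.Adj b c ∧ G.Adj a c ∧
    α = s(a, b) ∧ β = s(b, c) ∧ γ = s(a, c)

/-- Two edges of `G` forming a chordless path of length 2. -/
def IsChordlessPair {V : Type*} (G : SimpleGraph V) (α β : Sym2 V) : Prop :=
  ∃ a b c : V, G.Adj a b ∧ G.Adj b c ∧ a ≠ c ∧ ¬ G.Adj a c ∧
    α = s(a, b) ∧ β = s(b, c)

/-- The set `E(Π)` of edges of `G` whose two endpoints lie in a common part
of the partition `P`. -/
def edgeSetOf {V : Type*} (G : SimpleGraph V) (P : Set (Set V)) : Set (Sym2 V) :=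
  {e | e ∈ G.edgeSet ∧ ∃ p ∈ P, ∀ v : V, v ∈ e → v ∈ p}

/-- A clique packing: a partition of the vertex set all of whose parts are
cliques. -/
def IsCliquePacking {V : Type*} (G : SimpleGraph V) (P : Set (Set V)) : Prop :=
  Setoid.IsPartition P ∧ ∀ p ∈ P, G.IsClique p

/-- The partition of `V` into the connected components of the graph `(V, K)`. -/
def componentPartition {V : Type*} (K : Set (Sym2 V)) : Set (Set V) :=
  {s | ∃ c : (SimpleGraph.fromEdgeSet K).ConnectedComponent, s = c.supp}

theorem closed_edgeSet_yields_cliquePacking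
    {V : Type*} [Fintype V] (G : SimpleGraph V) (Y : Set (Sym2 V))
    (hYE : Y ⊆ G.edgeSet)
    (h1 : ∀ α β γ : Sym2 V, IsEdgeTriangle G α β γ →
      ((α ∈ Y ∧ β ∈ Y) ∨ (α ∈ Y ∧ γ ∈ Y) ∨ (β ∈ Y ∧ γ ∈ Y)) →
      (α ∈ Y ∧ β ∈ Y ∧ γ ∈ Y))
    (h2 : ∀ α β : Sym2 V, IsChordlessPair G α β → ¬ (α ∈ Y ∧ β ∈ Y)) :
    (∀ p ∈ componentPartition Y, G.IsClique p) ∧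
    IsCliquePacking G (componentPartition Y) ∧
    edgeSetOf G (componentPartition Y) = Y := by
  set K := fromEdgeSet Y with hK
  -- transitivity of K-adjacency
  have htrans : ∀ a b c : V, K.Adj a b → K.Adj b c → a ≠ c → K.Adj a c := by
    intro a b c hab hbc hac
    rw [hK, fromEdgeSet_adj] at hab hbc ⊢
    refine ⟨?_, hac⟩
    have hGab : G.Adj a b := hab.1 |> hYE |> (SimpleGraph.mem_edgeSet G).1
    have hGbc : G.Adj b c := hbc.1 |> hYE |> (SimpleGraph.mem_edgeSet G).1
    by_cases hGac : G.Adj a c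
    · exact (h1 s(a,b) s(b,c) s(a,c) ⟨a, b, c, hGab, hGbc, hGac, rfl, rfl, rfl⟩
        (Or.inl ⟨hab.1, hbc.1⟩)).2.2
    · exact absurd ⟨hab.1, hbc.1⟩
        (h2 s(a,b) s(b,c) ⟨a, b, c, hGab, hGbc, hac, hGac, rfl, rfl⟩)
  have hreach : ∀ a c : V, K.Reachable a c → a = c ∨ K.Adj a c := by
    intro a c ⟨w⟩
    induction w with
    | nil => exact Or.inl rfl
    | @cons a b c h p ih =>
      rcases ih with rfl | h'
      · exact Or.inr h
      · by_cases hac : a = c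
        · exact Or.inl hac
        · exact Or.inr (htrans a b c h h' hac)
  have hYadj : ∀ a b : V, s(a,b) ∈ Y → K.Adj a b := by
    intro a b hmem
    rw [hK, fromEdgeSet_adj]
    exact ⟨hmem, ((SimpleGraph.mem_edgeSet G).1 (hYE hmem)).ne⟩
  -- cliques
  have hclique : ∀ p ∈ componentPartition Y, G.IsClique p := by
    rintro p ⟨c, rfl⟩ x hx y hy hxy
    rw [ConnectedComponent.mem_supp_iff] at hx hy
    have : K.Reachable x y := ConnectedComponent.exact (hx.trans hy.symm)
    rcases hreach x y this with rfl | h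
    · exact absurd rfl hxy
    · rw [hK, fromEdgeSet_adj] at h
      exact (SimpleGraph.mem_edgeSet G).1 (hYE h.1)
  refine ⟨hclique, ⟨⟨?_, ?_⟩, hclique⟩, ?_⟩
  · rintro ⟨c, hc⟩
    induction c using ConnectedComponent.ind with
    | _ v =>
      have hv : v ∈ (K.connectedComponentMk v).supp := rfl
      rw [← hc] at hv
      exact hv
  · intro v
    refine ⟨(K.connectedComponentMk v).supp, ⟨⟨_, rfl⟩, rfl⟩, ?_⟩
    rintro s ⟨⟨c, rfl⟩, hv⟩
    rw [ConnectedComponent.mem_supp_iff] at hv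
    rw [← hv]
  · ext e
    constructor
    · rintro ⟨heE, p, ⟨c, rfl⟩, hp⟩
      induction e using Sym2.inductionOn with
      | _ x y =>
        have hx := hp x (Sym2.mem_mk_left x y)
        have hy := hp y (Sym2.mem_mk_right x y)
        rw [ConnectedComponent.mem_supp_iff] at hx hy
        have hxy : x ≠ y := ((SimpleGraph.mem_edgeSet G).1 heE).ne
        rcases hreach x y (ConnectedComponent.exact (hx.trans hy.symm)) with rfl | h
        · exact absurd rfl hxy
        · rw [hK, fromEdgeSet_adj] at h
          exact h.1
    · intro he
      induction e using Sym2.inductionOn with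
      | _ x y =>
        have hadj := hYadj x y he
        refine ⟨hYE he, (K.connectedComponentMk x).supp, ⟨_, rfl⟩, ?_⟩
        intro v hv
        rcases Sym2.mem_iff.1 hv with rfl | rfl
        · rfl
        · rw [ConnectedComponent.mem_supp_iff]
          exact ConnectedComponent.sound hadj.reachable.symm
end

section
/- Let G = (V,E) be a graph and K ⊆ E. Then K = E(Π) for some partition Π of V into connected sets (where E(Π) is the set of edges with both endpoints in the same part, and the parts of Π are the connected components of (V,K)) if and only if for every chordless cycle C of G (viewed as a set of edges), |C \ K| ≠ 1. -/
open SimpleGraph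

/-- A walk is chordless if any two of its vertices that are adjacent in `G`
are joined by an edge of the walk itself (no chords). -/
def SimpleGraph.Walk.IsChordless' {V : Type*} {G : SimpleGraph V} {u v : V}
    (p : G.Walk u v) : Prop :=
  ∀ a b : V, a ∈ p.support → b ∈ p.support → G.Adj a b → s(a, b) ∈ p.edges

/-- The edge set of a walk, as a set. -/
def SimpleGraph.Walk.edgeSet' {V : Type*} {G : SimpleGraph V} {u v : V}
    (p : G.Walk u v) : Set (Sym2 V) :=
  {e | e ∈ p.edges}

private lemma walk_seg {V : Type*} {G : SimpleGraph V} {a b : V} (p : G.Walk a b)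
    (x y : V) (hx : x ∈ p.support) (hy : y ∈ p.support) :
    (∃ (q : G.Walk a x) (m : G.Walk x y) (r : G.Walk y b), p = q.append (m.append r)) ∨
    (∃ (q : G.Walk a y) (m : G.Walk y x) (r : G.Walk x b), p = q.append (m.append r)) := by
  obtain ⟨q, r, rfl⟩ := Walk.mem_support_iff_exists_append.mp hx
  rcases (Walk.mem_support_append_iff _ _).mp hy with hyq | hyr
  · obtain ⟨q', m, rfl⟩ := Walk.mem_support_iff_exists_append.mp hyq
    exact Or.inr ⟨q', m, r, (Walk.append_assoc _ _ _).symm⟩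
  · obtain ⟨m, r', rfl⟩ := Walk.mem_support_iff_exists_append.mp hyr
    exact Or.inl ⟨q, m, r', rfl⟩

private lemma edge_of_length_one {V : Type*} {G : SimpleGraph V} {x y : V}
    {m : G.Walk x y} (h : m.length = 1) : s(x, y) ∈ m.edges := by
  cases m with
  | nil => simp at h
  | cons h' m' =>
    rw [Walk.length_cons, add_eq_right] at h
    have := Walk.eq_of_length_eq_zero h
    subst this
    simp

private lemma key_no_chord {V : Type*} {G : SimpleGraph V} {K : Set (Sym2 V)}
    {a b x y : V}
    (q : (fromEdgeSet K).Walk a x) (m : (fromEdgeSet K).Walk x y)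
    (r : (fromEdgeSet K).Walk y b)
    (hxy : G.Adj x y)
    (hlen : q.length + (m.length + r.length) = (fromEdgeSet K).dist a b)
    (hmin : ∀ x' y' : V, G.Adj x' y' → s(x', y') ∉ K → (fromEdgeSet K).Reachable x' y' →
      (fromEdgeSet K).dist a b ≤ (fromEdgeSet K).dist x' y')
    (hnotp : s(x, y) ∉ (q.append (m.append r)).edges)
    (hnotab : s(x, y) ≠ s(a, b)) : False := by
  have hmem : s(x, y) ∈ m.edges → False := by
    intro hm
    exact hnotp (by simp [Walk.edges_append, hm])
  by_cases hKxy : s(x, y) ∈ K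
  · -- chord inside K: shortcut the geodesic
    have hH : (fromEdgeSet K).Adj x y := (fromEdgeSet_adj _).mpr ⟨hKxy, hxy.ne⟩
    have hw := SimpleGraph.dist_le (q.append (Walk.cons hH r))
    rw [Walk.length_append, Walk.length_cons] at hw
    have hm1 : m.length ≤ 1 := by omega
    interval_cases hml : m.length
    · exact hxy.ne (Walk.eq_of_length_eq_zero hml)
    · exact hmem (edge_of_length_one hml)
  · -- a better pair than (a, b), contradicting minimality
    have h1 := hmin x y hxy hKxy ⟨m⟩
    have h2 := SimpleGraph.dist_le m
    have hq0 : q.length = 0 := by omega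
    have hr0 : r.length = 0 := by omega
    obtain rfl : a = x := Walk.eq_of_length_eq_zero hq0
    obtain rfl : y = b := Walk.eq_of_length_eq_zero hr0
    exact hnotab rfl


theorem edgeSet_of_connPac_iff_chordless_cycle_condition
    {V : Type*} [Fintype V] (G : SimpleGraph V) (K : Set (Sym2 V))
    (hK : K ⊆ G.edgeSet) :
    K = edgeSetOf G (componentPartition K) ↔
      ∀ (u : V) (c : G.Walk u u), c.IsCycle → c.IsChordless' →
        (c.edgeSet' \ K).ncard ≠ 1 := by
  classical
  constructor
  · intro hEq u c hcyc hchord hcard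
    obtain ⟨e, he⟩ := Set.ncard_eq_one.mp hcard
    have h1 : e ∈ c.edgeSet' \ K := he ▸ Set.mem_singleton e
    clear hcard
    induction e using Sym2.ind with
    | _ a b =>
    have heE : s(a, b) ∈ c.edges := h1.1
    have heK : s(a, b) ∉ K := h1.2
    have hadj : G.Adj a b := c.adj_of_mem_edges heE
    have hsub : ∀ e' ∈ c.edges, e' ∈ (fromEdgeSet (insert s(a, b) K)).edgeSet := by
      intro e' he'
      have hG' : e' ∈ G.edgeSet := c.edges_subset_edgeSet he'
      rw [edgeSet_fromEdgeSet]
      refine ⟨?_, G.not_isDiag_of_mem_edgeSet hG'⟩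
      by_cases hk : e' ∈ K
      · exact Set.mem_insert_of_mem _ hk
      · have hmem : e' ∈ c.edgeSet' \ K := ⟨he', hk⟩
        rw [he, Set.mem_singleton_iff] at hmem
        rw [hmem]
        exact Set.mem_insert _ _
    have hcyc' : (c.transfer _ hsub).IsCycle := hcyc.transfer hsub
    have heE' : s(a, b) ∈ (c.transfer _ hsub).edges := by rwa [Walk.edges_transfer]
    have hreach : (fromEdgeSet (insert s(a, b) K) \ fromEdgeSet {s(a, b)}).Reachable a b :=
      ((adj_and_reachable_delete_edges_iff_exists_cycle
        (G := fromEdgeSet (insert s(a, b) K))).mpr ⟨u, _, hcyc', heE'⟩).2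
    have hle : fromEdgeSet (insert s(a, b) K) \ fromEdgeSet {s(a, b)} ≤ fromEdgeSet K := by
      intro x y hxy
      rw [sdiff_adj] at hxy
      obtain ⟨hx1, hx2⟩ := hxy
      rw [fromEdgeSet_adj] at hx1
      refine (fromEdgeSet_adj _).mpr ⟨?_, hx1.2⟩
      rcases Set.mem_insert_iff.mp hx1.1 with h' | h'
      · exact absurd ((fromEdgeSet_adj _).mpr ⟨by simp [h'], hx1.2⟩) hx2
      · exact h'
    have hreachK : (fromEdgeSet K).Reachable a b := hreach.mono hle
    have hfin : s(a, b) ∈ edgeSetOf G (componentPartition K) := by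
      refine ⟨c.edges_subset_edgeSet heE,
        ((fromEdgeSet K).connectedComponentMk a).supp, ⟨_, rfl⟩, ?_⟩
      intro v hv
      rcases Sym2.mem_iff.mp hv with rfl | rfl
      · exact (ConnectedComponent.mem_supp_iff _ _).mpr rfl
      · exact (ConnectedComponent.mem_supp_iff _ _).mpr (ConnectedComponent.sound hreachK.symm)
    rw [← hEq] at hfin
    exact heK hfin
  · intro h
    ext e
    induction e using Sym2.ind with
    | _ a₁ b₁ =>
    constructor
    · intro heK
      have hadj : G.Adj a₁ b₁ := (G.mem_edgeSet).mp (hK heK)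
      refine ⟨hK heK, ((fromEdgeSet K).connectedComponentMk a₁).supp, ⟨_, rfl⟩, ?_⟩
      intro v hv
      rcases Sym2.mem_iff.mp hv with rfl | rfl
      · exact (ConnectedComponent.mem_supp_iff _ _).mpr rfl
      · refine (ConnectedComponent.mem_supp_iff _ _).mpr (ConnectedComponent.sound ?_)
        exact (((fromEdgeSet_adj _).mpr ⟨heK, hadj.ne⟩).symm).reachable
    · rintro ⟨heG, S, ⟨comp, rfl⟩, hmem⟩
      by_contra np
      have hadj1 : G.Adj a₁ b₁ := (G.mem_edgeSet).mp heG
      have ha : (fromEdgeSet K).connectedComponentMk a₁ = comp :=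
        (ConnectedComponent.mem_supp_iff _ _).mp (hmem a₁ (Sym2.mem_mk_left _ _))
      have hb : (fromEdgeSet K).connectedComponentMk b₁ = comp :=
        (ConnectedComponent.mem_supp_iff _ _).mp (hmem b₁ (Sym2.mem_mk_right _ _))
      have hr : (fromEdgeSet K).Reachable a₁ b₁ :=
        ConnectedComponent.exact (ha.trans hb.symm)
      have hex : ∃ n : ℕ, ∃ x y : V,
          (G.Adj x y ∧ s(x, y) ∉ K ∧ (fromEdgeSet K).Reachable x y)
          ∧ (fromEdgeSet K).dist x y = n := ⟨_, a₁, b₁, ⟨hadj1, np, hr⟩, rfl⟩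
      obtain ⟨a, b, ⟨hab, hnK, hrab⟩, hdist⟩ := Nat.find_spec hex
      have hmin : ∀ x' y' : V, G.Adj x' y' → s(x', y') ∉ K →
          (fromEdgeSet K).Reachable x' y' →
          (fromEdgeSet K).dist a b ≤ (fromEdgeSet K).dist x' y' := by
        intro x' y' h1 h2 h3
        rw [hdist]
        exact Nat.find_min' hex ⟨x', y', ⟨h1, h2, h3⟩, rfl⟩
      obtain ⟨p, hp, hplen⟩ := hrab.exists_path_of_dist
      have hpK : ∀ e' ∈ p.edges, e' ∈ K := fun e' he' =>
        ((edgeSet_fromEdgeSet K ▸ p.edges_subset_edgeSet he') : e' ∈ K \ _).1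
      have hpG : ∀ e' ∈ p.edges, e' ∈ G.edgeSet := fun e' he' => hK (hpK e' he')
      have hcyc : (Walk.cons hab.symm (p.transfer G hpG)).IsCycle := by
        rw [Walk.cons_isCycle_iff]
        refine ⟨hp.transfer hpG, ?_⟩
        rw [Walk.edges_transfer, Sym2.eq_swap]
        exact fun hc => hnK (hpK _ hc)
      have hce : (Walk.cons hab.symm (p.transfer G hpG)).edges = s(b, a) :: p.edges := by
        rw [Walk.edges_cons, Walk.edges_transfer]
      have hsupp : ∀ z, z ∈ (Walk.cons hab.symm (p.transfer G hpG)).support →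
          z ∈ p.support := by
        intro z hz
        rw [Walk.support_cons, List.mem_cons] at hz
        rcases hz with rfl | hz
        · exact p.end_mem_support
        · rwa [Walk.support_transfer] at hz
      have hchord : (Walk.cons hab.symm (p.transfer G hpG)).IsChordless' := by
        intro x y hx hy hxy
        by_contra hno
        have hnoP : s(x, y) ∉ p.edges := fun hm =>
          hno (by rw [hce]; exact List.mem_cons_of_mem _ hm)
        have hnoAB : s(x, y) ≠ s(a, b) := by
          intro hq
          refine hno ?_
          rw [hce, hq, Sym2.eq_swap]
          exact List.mem_cons_self
        rcases walk_seg p x y (hsupp x hx) (hsupp y hy) with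
          ⟨q, m, r, hpeq⟩ | ⟨q, m, r, hpeq⟩
        · refine key_no_chord q m r hxy ?_ hmin ?_ hnoAB
          · rw [← hplen, hpeq]; simp [Walk.length_append]
          · rw [← hpeq]; exact hnoP
        · refine key_no_chord q m r hxy.symm ?_ hmin ?_ ?_
          · rw [← hplen, hpeq]; simp [Walk.length_append]
          · rw [← hpeq]
            exact fun h' => hnoP (by rwa [Sym2.eq_swap] at h')
          · exact fun h' => hnoAB (Sym2.eq_swap.trans h')
      have hcard : ((Walk.cons hab.symm (p.transfer G hpG)).edgeSet' \ K).ncard = 1 := by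
        have hset : (Walk.cons hab.symm (p.transfer G hpG)).edgeSet' \ K = {s(a, b)} := by
          ext e'
          simp only [Set.mem_diff, Set.mem_singleton_iff, SimpleGraph.Walk.edgeSet',
            Set.mem_setOf_eq, hce, List.mem_cons]
          constructor
          · rintro ⟨rfl | h', hek⟩
            · exact Sym2.eq_swap
            · exact absurd (hpK _ h') hek
          · rintro rfl
            exact ⟨Or.inl Sym2.eq_swap, hnK⟩
        rw [hset, Set.ncard_singleton]
      exact h b (Walk.cons hab.symm (p.transfer G hpG)) hcyc hchord hcard
end

section
/- Let G = (V,E) be a graph and K ⊆ E. If for every chordless cycle C of G (as an edge set) the condition C \ K ⊆ {α} implies C ⊆ K holds (for any single edge α), then the same condition holds for every cycle C′ of G, chordless or not. -/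
open SimpleGraph

section Aux

variable {V : Type*} {G : SimpleGraph V}

open SimpleGraph.Walk

/-- In a nonnil closed walk, any support vertex is in the tail of the support. -/
lemma mem_tail_of_closed {u x : V} {c : G.Walk u u} (hc : ¬ c.Nil)
    (hx : x ∈ c.support) : x ∈ c.support.tail := by
  cases c with
  | nil => exact absurd Walk.nil_nil hc
  | cons h q =>
    simp only [Walk.support_cons, List.tail_cons]
    rcases List.mem_cons.mp (by simpa using hx) with rfl | hxq
    · exact q.end_mem_support
    · exact hxq

/-- Splitting a cycle at a vertex distinct from the base point yields two paths. -/
lemma split_paths [DecidableEq V] {a b : V} (c : G.Walk a a) (hc : c.IsCycle) (hb : b ∈ c.support)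
    (hba : b ≠ a) : (c.takeUntil b hb).IsPath ∧ (c.dropUntil b hb).IsPath := by
  set p1 := c.takeUntil b hb with hp1
  set p2 := c.dropUntil b hb with hp2
  have hspec := c.take_spec hb
  have hsup : p1.support ++ p2.support.tail = c.support := by
    rw [← Walk.support_append, hspec]
  have htails : p1.support.tail ++ p2.support.tail = c.support.tail := by
    have h1 := p1.support_eq_cons
    have h2 := c.support_eq_cons
    rw [h1, h2, List.cons_append] at hsup
    exact List.tail_eq_of_cons_eq hsup
  have hnd : (p1.support.tail ++ p2.support.tail).Nodup := htails ▸ hc.2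
  rw [List.nodup_append] at hnd
  obtain ⟨hnd1, hnd2, hdisj⟩ := hnd
  have ha2 : a ∈ p2.support.tail := Walk.end_mem_tail_support_of_ne hba p2
  have hb1 : b ∈ p1.support.tail := Walk.end_mem_tail_support_of_ne (Ne.symm hba) p1
  constructor
  · rw [Walk.isPath_def, p1.support_eq_cons, List.nodup_cons]
    exact ⟨fun hmem => hdisj _ hmem _ ha2 rfl, hnd1⟩
  · rw [Walk.isPath_def, p2.support_eq_cons, List.nodup_cons]
    exact ⟨fun hmem => hdisj _ hb1 _ hmem rfl, hnd2⟩

end Aux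

theorem chordless_cycle_condition_extends_to_all_cycles
    {V : Type*} [Fintype V] (G : SimpleGraph V) (K : Set (Sym2 V))
    (hK : K ⊆ G.edgeSet)
    (h : ∀ (u : V) (c : G.Walk u u), c.IsCycle → c.IsChordless' →
      ∀ α : Sym2 V, c.edgeSet' \ K ⊆ {α} → c.edgeSet' ⊆ K) :
    ∀ (u : V) (c : G.Walk u u), c.IsCycle →
      ∀ α : Sym2 V, c.edgeSet' \ K ⊆ {α} → c.edgeSet' ⊆ K := by
  classical
  suffices H : ∀ n (u : V) (c : G.Walk u u), c.length ≤ n → c.IsCycle →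
      ∀ α : Sym2 V, c.edgeSet' \ K ⊆ {α} → c.edgeSet' ⊆ K by
    intro u c hc α hα
    exact H c.length u c le_rfl hc α hα
  intro n
  induction n with
  | zero =>
    intro u c hlen hc α hα
    have := hc.three_le_length
    omega
  | succ n ih =>
    intro u c hlen hc α hα
    by_cases hch : c.IsChordless'
    · exact h u c hc hch α hα
    · simp only [SimpleGraph.Walk.IsChordless'] at hch
      push_neg at hch
      obtain ⟨a, b, ha, hb, hab, hne⟩ := hch
      set c' := c.rotate a ha with hc'def
      have hc' : c'.IsCycle := hc.rotate ha
      have hrot := c.rotate_edges a ha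
      have hbt : b ∈ c.support.tail := mem_tail_of_closed hc.not_nil hb
      have hb' : b ∈ c'.support := by
        have := (SimpleGraph.Walk.support_rotate c a ha).mem_iff.mpr hbt
        exact List.mem_of_mem_tail this
      have hba : b ≠ a := hab.ne'
      obtain ⟨hp1, hp2⟩ := split_paths c' hc' hb' hba
      set p1 := c'.takeUntil b hb' with hp1def
      set p2 := c'.dropUntil b hb' with hp2def
      have hspec := c'.take_spec hb'
      have hedges : p1.edges ++ p2.edges = c'.edges := by
        rw [← SimpleGraph.Walk.edges_append, hspec]
      have hmemc : ∀ e, e ∈ c'.edges ↔ e ∈ c.edges := fun e => hrot.mem_iff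
      have hchord : s(a, b) ∉ c'.edges := fun hx => hne ((hmemc _).1 hx)
      rw [← hedges, List.mem_append] at hchord
      push_neg at hchord
      obtain ⟨hch1, hch2⟩ := hchord
      have hcyc1 : (SimpleGraph.Walk.cons hab p1.reverse).IsCycle := by
        rw [SimpleGraph.Walk.cons_isCycle_iff]
        refine ⟨hp1.reverse, ?_⟩
        rw [SimpleGraph.Walk.edges_reverse, List.mem_reverse]
        exact hch1
      have hcyc2 : (SimpleGraph.Walk.cons hab p2).IsCycle := by
        rw [SimpleGraph.Walk.cons_isCycle_iff]
        exact ⟨hp2, hch2⟩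
      have hlen' : c'.length = c.length := by
        have := hrot.perm.length_eq
        rwa [SimpleGraph.Walk.length_edges, SimpleGraph.Walk.length_edges] at this
      have hl12 : p1.length + p2.length = c.length := by
        have := congrArg SimpleGraph.Walk.length hspec
        rw [SimpleGraph.Walk.length_append, ← hp1def, ← hp2def] at this
        omega
      have h3a := hcyc1.three_le_length
      have h3b := hcyc2.three_le_length
      rw [SimpleGraph.Walk.length_cons, SimpleGraph.Walk.length_reverse] at h3a
      rw [SimpleGraph.Walk.length_cons] at h3b
      have hl1 : (SimpleGraph.Walk.cons hab p1.reverse).length ≤ n := by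
        rw [SimpleGraph.Walk.length_cons, SimpleGraph.Walk.length_reverse]
        omega
      have hl2 : (SimpleGraph.Walk.cons hab p2).length ≤ n := by
        rw [SimpleGraph.Walk.length_cons]
        omega
      have hsub1 : ∀ e ∈ p1.edges, e ∈ c.edges := fun e he =>
        (hmemc e).1 (hedges ▸ List.mem_append_left _ he)
      have hsub2 : ∀ e ∈ p2.edges, e ∈ c.edges := fun e he =>
        (hmemc e).1 (hedges ▸ List.mem_append_right _ he)
      have hmem1 : ∀ e, e ∈ (SimpleGraph.Walk.cons hab p1.reverse).edges ↔
          e = s(a, b) ∨ e ∈ p1.edges := by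
        intro e
        rw [SimpleGraph.Walk.edges_cons, List.mem_cons, SimpleGraph.Walk.edges_reverse,
          List.mem_reverse]
      have hmem2 : ∀ e, e ∈ (SimpleGraph.Walk.cons hab p2).edges ↔
          e = s(a, b) ∨ e ∈ p2.edges := by
        intro e
        rw [SimpleGraph.Walk.edges_cons, List.mem_cons]
      by_cases hk : s(a, b) ∈ K
      · -- chord in K: both halves give cycles with at most one non-K edge α
        have r1 : (SimpleGraph.Walk.cons hab p1.reverse).edgeSet' ⊆ K := by
          refine ih a _ hl1 hcyc1 α ?_
          rintro e ⟨he, heK⟩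
          rcases (hmem1 e).1 he with rfl | he1
          · exact absurd hk heK
          · exact hα ⟨hsub1 e he1, heK⟩
        have r2 : (SimpleGraph.Walk.cons hab p2).edgeSet' ⊆ K := by
          refine ih a _ hl2 hcyc2 α ?_
          rintro e ⟨he, heK⟩
          rcases (hmem2 e).1 he with rfl | he2
          · exact absurd hk heK
          · exact hα ⟨hsub2 e he2, heK⟩
        intro e he
        have he' : e ∈ c'.edges := (hmemc e).2 he
        rw [← hedges, List.mem_append] at he'
        rcases he' with he1 | he2
        · exact r1 ((hmem1 e).2 (Or.inr he1))
        · exact r2 ((hmem2 e).2 (Or.inr he2))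
      · -- chord not in K: derive a contradiction
        exfalso
        have hndE : (p1.edges ++ p2.edges).Nodup := by
          rw [hedges]; exact hc'.edges_nodup
        rw [List.nodup_append] at hndE
        obtain ⟨-, -, hdisjE⟩ := hndE
        by_cases h1e : ∀ e ∈ p1.edges, e ∈ K
        · have r1 : (SimpleGraph.Walk.cons hab p1.reverse).edgeSet' ⊆ K := by
            refine ih a _ hl1 hcyc1 (s(a, b)) ?_
            rintro e ⟨he, heK⟩
            rcases (hmem1 e).1 he with rfl | he1
            · rfl
            · exact absurd (h1e e he1) heK
          exact hk (r1 ((hmem1 _).2 (Or.inl rfl)))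
        · push_neg at h1e
          obtain ⟨e1, he1, he1K⟩ := h1e
          by_cases h2e : ∀ e ∈ p2.edges, e ∈ K
          · have r2 : (SimpleGraph.Walk.cons hab p2).edgeSet' ⊆ K := by
              refine ih a _ hl2 hcyc2 (s(a, b)) ?_
              rintro e ⟨he, heK⟩
              rcases (hmem2 e).1 he with rfl | he2
              · rfl
              · exact absurd (h2e e he2) heK
            exact hk (r2 ((hmem2 _).2 (Or.inl rfl)))
          · push_neg at h2e
            obtain ⟨e2, he2, he2K⟩ := h2e
            have hα1 : e1 = α := hα ⟨hsub1 e1 he1, he1K⟩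
            have hα2 : e2 = α := hα ⟨hsub2 e2 he2, he2K⟩
            exact hdisjE e1 he1 e1 (hα1 ▸ hα2 ▸ he2) rfl
end

section
/- For a graph G, the map F ↦ Π(F), sending an edge set F to the partition of V into the connected components of (V,F), restricted to the Σ^G-closed edge sets, is a bijection onto the set of connected-set packings (Conn-Pacs) of G, with inverse Π ↦ E(Π). -/
open SimpleGraph

/-- A walk is chordless if any two of its vertices that are adjacent in `G`
are joined by an edge of the walk itself (no chords). -/
def SimpleGraph.Walk.IsChordlessEdges {V : Type*} {G : SimpleGraph V} {u v : V}
    (p : G.Walk u v) : Prop :=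
  ∀ a b : V, a ∈ p.support → b ∈ p.support → G.Adj a b → s(a, b) ∈ p.edges

/-- The edge set of a walk, as a set. -/
def SimpleGraph.Walk.edgeSetOfWalk {V : Type*} {G : SimpleGraph V} {u v : V}
    (p : G.Walk u v) : Set (Sym2 V) :=
  {e | e ∈ p.edges}

/-- An edge set `K` is `Σ^G`-closed: for every chordless cycle `C` of `G` and
every edge `e` of `C`, if `C \ {e} ⊆ K` then `e ∈ K`. -/
def SigmaGClosed {V : Type*} (G : SimpleGraph V) (K : Set (Sym2 V)) : Prop :=
  K ⊆ G.edgeSet ∧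
  ∀ (u : V) (c : G.Walk u u), c.IsCycle → c.IsChordlessEdges →
    ∀ e ∈ c.edges, c.edgeSetOfWalk \ {e} ⊆ K → e ∈ K

/-- A Conn-Pac: a partition of the vertex set all of whose parts induce
connected subgraphs. -/
def IsConnPac {V : Type*} (G : SimpleGraph V) (P : Set (Set V)) : Prop :=
  Setoid.IsPartition P ∧ ∀ p ∈ P, (G.induce p).Connected



section AuxLemmas

variable {V : Type*}

/-- Parts of a partition containing a common element are equal. -/
private lemma part_eq' {P : Set (Set V)} (hP : Setoid.IsPartition P) {p q : Set V}
    (hp : p ∈ P) (hq : q ∈ P) {b : V} (hbp : b ∈ p) (hbq : b ∈ q) : p = q := by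
  obtain ⟨r, -, hr⟩ := hP.2 b
  exact (hr p ⟨hp, hbp⟩).trans (hr q ⟨hq, hbq⟩).symm

/-- A walk all of whose edges lie in `edgeSetOf G P` has its endpoints in a common part. -/
private lemma goodWalk' {G : SimpleGraph V} {P : Set (Set V)} (hP : Setoid.IsPartition P) :
    ∀ {x y : V} (w : G.Walk x y), (∀ f ∈ w.edges, ∃ p ∈ P, ∀ v ∈ f, v ∈ p) →
      ∃ p ∈ P, x ∈ p ∧ y ∈ p := by
  intro x y w
  induction w with
  | nil =>
    intro _
    obtain ⟨p, ⟨hp, hx⟩, -⟩ := hP.2 _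
    exact ⟨p, hp, hx, hx⟩
  | @cons x c y h w ih =>
    intro hf
    obtain ⟨q, hq, hinq⟩ := hf s(x, c) (by simp)
    obtain ⟨p, hp, hc, hy⟩ := ih (fun f hf' => hf f (by rw [Walk.edges_cons]; exact List.mem_cons_of_mem _ hf'))
    have hqp : q = p := part_eq' hP hq hp (hinq c (Sym2.mem_mk_right x c)) hc
    exact ⟨p, hp, hqp ▸ hinq x (Sym2.mem_mk_left x c), hy⟩

/-- Split a walk at an edge. -/
private lemma exists_edge_split' {G : SimpleGraph V} {e : Sym2 V} :
    ∀ {x y : V} (w : G.Walk x y), e ∈ w.edges →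
      ∃ (a b : V) (w1 : G.Walk x a) (w2 : G.Walk b y),
        e = s(a, b) ∧ w.edges = w1.edges ++ e :: w2.edges := by
  intro x y w
  induction w with
  | nil => simp
  | @cons x c y h w ih =>
    intro he
    rw [Walk.edges_cons, List.mem_cons] at he
    rcases he with he | he
    · exact ⟨x, c, Walk.nil, w, he, by simp [he]⟩
    · obtain ⟨a, b, w1, w2, he1, he2⟩ := ih he
      exact ⟨a, b, Walk.cons h w1, w2, he1, by simp [he2]⟩

/-- Split a walk at two support vertices, in whichever order they occur. -/
private lemma walk_split_two' {G : SimpleGraph V} [DecidableEq V] {x y a b : V}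
    (p : G.Walk x y) (ha : a ∈ p.support) (hb : b ∈ p.support) :
    ∃ (a' b' : V) (w1 : G.Walk x a') (w2 : G.Walk a' b') (w3 : G.Walk b' y),
      s(a', b') = s(a, b) ∧ w1.append (w2.append w3) = p := by
  have hb2 : b ∈ ((p.takeUntil a ha).append (p.dropUntil a ha)).support := by
    rw [Walk.take_spec]; exact hb
  rw [Walk.mem_support_append_iff] at hb2
  rcases hb2 with hb2 | hb2
  · exact ⟨b, a, (p.takeUntil a ha).takeUntil b hb2, (p.takeUntil a ha).dropUntil b hb2,
      p.dropUntil a ha, Sym2.eq_swap, by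
        rw [Walk.append_assoc, Walk.take_spec, Walk.take_spec]⟩
  · exact ⟨a, b, p.takeUntil a ha, (p.dropUntil a ha).takeUntil b hb2,
      (p.dropUntil a ha).dropUntil b hb2, rfl, by rw [Walk.take_spec, Walk.take_spec]⟩

/-- A walk in a subgraph whose support lies in `s` yields reachability in the induced graph. -/
private lemma reachable_induce_of_walk' {G H : SimpleGraph V} (hle : H ≤ G) {s : Set V} :
    ∀ {x y : V} (w : H.Walk x y) (hs : ∀ z ∈ w.support, z ∈ s),
      (G.induce s).Reachable ⟨x, hs x w.start_mem_support⟩ ⟨y, hs y w.end_mem_support⟩ := by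
  intro x y w
  induction w with
  | nil => intro _; rfl
  | @cons x c y h w ih =>
    intro hs
    have hx : x ∈ s := hs x (by simp)
    have hc : c ∈ s := hs c (by simp)
    have hadj : (G.induce s).Adj ⟨x, hx⟩ ⟨c, hc⟩ := hle h
    exact hadj.reachable.trans (ih (fun z hz => hs z (by simp [hz])))

end AuxLemmas

private lemma mem_of_adj_reachable' {V : Type*} {G : SimpleGraph V} {K : Set (Sym2 V)}
    (hK : SigmaGClosed G K) {u v : V} (huv : G.Adj u v)
    (hr : (SimpleGraph.fromEdgeSet K).Reachable u v) : s(u, v) ∈ K := by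
  classical
  obtain ⟨w0⟩ := hr
  suffices H : ∀ n, ∀ u v : V, G.Adj u v →
      ∀ p : (SimpleGraph.fromEdgeSet K).Walk u v, p.length ≤ n → s(u, v) ∈ K from
    H w0.length u v huv w0 le_rfl
  intro n
  induction n using Nat.strong_induction_on with
  | _ n ih =>
  intro u v huv p hlen
  by_cases hmem : s(u, v) ∈ K
  · exact hmem
  have hq : p.bypass.IsPath := p.bypass_isPath
  have hqlen : p.bypass.length ≤ n := le_trans p.length_bypass_le hlen
  set p0 := p.bypass with hp0
  have hedg : ∀ e ∈ p0.edges, e ∈ K := by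
    intro e he
    have h1 := p0.edges_subset_edgeSet he
    rw [edgeSet_fromEdgeSet] at h1
    exact h1.1
  have hedgeG : ∀ e ∈ p0.edges, e ∈ G.edgeSet := fun e he => hK.1 (hedg e he)
  set t : G.Walk u v := p0.transfer G hedgeG with ht_def
  have ht_edges : t.edges = p0.edges := p0.edges_transfer _
  have ht_supp : t.support = p0.support := p0.support_transfer _
  have ht_path : t.IsPath := hq.transfer _
  have hnot : s(u, v) ∉ t.reverse.edges := by
    rw [Walk.edges_reverse, List.mem_reverse, ht_edges]
    intro hc; exact hmem (hedg _ hc)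
  set c : G.Walk u u := Walk.cons huv t.reverse with hc_def
  have hcyc : c.IsCycle := (Walk.cons_isCycle_iff _ huv).2 ⟨ht_path.reverse, hnot⟩
  have hce : c.edges = s(u, v) :: t.reverse.edges := rfl
  have hmem_c : s(u, v) ∈ c.edges := by rw [hce]; exact List.mem_cons_self
  have hp0_c : ∀ e ∈ p0.edges, e ∈ c.edges := by
    intro e he
    rw [hce]
    exact List.mem_cons_of_mem _ (by rw [Walk.edges_reverse, List.mem_reverse, ht_edges]; exact he)
  by_cases hch : c.IsChordlessEdges
  · refine hK.2 u c hcyc hch _ hmem_c ?_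
    rintro e ⟨he1, he2⟩
    have he1' : e ∈ c.edges := he1
    rw [hce, List.mem_cons] at he1'
    rcases he1' with rfl | he1'
    · exact absurd rfl he2
    · rw [Walk.edges_reverse, List.mem_reverse, ht_edges] at he1'
      exact hedg _ he1'
  · rw [Walk.IsChordlessEdges] at hch
    push_neg at hch
    obtain ⟨a, b, ha, hb, hab, hnab⟩ := hch
    have hsupp : ∀ z ∈ c.support, z ∈ p0.support := by
      intro z hz
      rw [hc_def, Walk.support_cons, List.mem_cons] at hz
      rcases hz with rfl | hz
      · exact p0.start_mem_support
      · rw [Walk.support_reverse, List.mem_reverse, ht_supp] at hz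
        exact hz
    obtain ⟨a', b', w1, w2, w3, hsym, happ⟩ := walk_split_two' p0 (hsupp a ha) (hsupp b hb)
    have hab' : G.Adj a' b' := by
      rw [← G.mem_edgeSet, hsym, G.mem_edgeSet]; exact hab
    have hnab' : s(a', b') ∉ c.edges := by rw [hsym]; exact hnab
    have hw2_edges : ∀ e ∈ w2.edges, e ∈ p0.edges := by
      intro e he
      rw [← happ, Walk.edges_append, Walk.edges_append]
      simp only [List.mem_append]
      exact Or.inr (Or.inl he)
    have hlen_sum : w1.length + (w2.length + w3.length) = p0.length := by
      have := congrArg Walk.length happ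
      rwa [Walk.length_append, Walk.length_append] at this
    -- equality case: w1, w3 both trivial
    by_cases hdeg : w1.length = 0 ∧ w3.length = 0
    · have hua : u = a' := Walk.eq_of_length_eq_zero hdeg.1
      have hbv : b' = v := Walk.eq_of_length_eq_zero hdeg.2
      subst hua; subst hbv
      exact absurd hmem_c hnab'
    · have hlt : w2.length < n := by omega
      have hchord : s(a', b') ∈ K := ih w2.length hlt a' b' hab' w2 le_rfl
      -- w2 has length ≥ 2
      have hw2len : 2 ≤ w2.length := by
        match w2, hw2_edges with
        | Walk.nil, _ => exact absurd rfl hab'.ne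
        | Walk.cons h (Walk.nil), hsub =>
          exact absurd (hp0_c _ (hsub _ (by simp))) hnab'
        | Walk.cons _ (Walk.cons _ _), _ => simp only [Walk.length_cons]; omega
      have hadjK : (SimpleGraph.fromEdgeSet K).Adj a' b' :=
        (fromEdgeSet_adj _).2 ⟨hchord, hab'.ne⟩
      set w' := w1.append (Walk.cons hadjK w3) with hw'
      have hw'len : w'.length = w1.length + (w3.length + 1) := by
        rw [hw', Walk.length_append, Walk.length_cons]
      exact ih w'.length (by omega) u v huv w' le_rfl

theorem componentPartition_bijects_closed_sets_with_connPacs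
    {V : Type*} [Fintype V] (G : SimpleGraph V) :
    (∀ K : Set (Sym2 V), SigmaGClosed G K →
      IsConnPac G (componentPartition K) ∧
      edgeSetOf G (componentPartition K) = K) ∧
    (∀ P : Set (Set V), IsConnPac G P →
      SigmaGClosed G (edgeSetOf G P) ∧
      componentPartition (edgeSetOf G P) = P) := by
  classical
  constructor
  · -- Part 1 : closed edge sets ↦ conn-pacs
    intro K hK
    set H := SimpleGraph.fromEdgeSet K with hH
    have hle : H ≤ G := by
      intro a b hab
      rw [hH, fromEdgeSet_adj] at hab
      exact (G.mem_edgeSet).1 (hK.1 hab.1)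
    have hpart : Setoid.IsPartition (componentPartition K) := by
      constructor
      · rintro ⟨c, hc⟩
        obtain ⟨w, hw⟩ := c.exists_rep
        have : w ∈ c.supp := (c.mem_supp_iff w).2 hw
        rw [← hc] at this
        exact this
      · intro a
        refine ⟨(H.connectedComponentMk a).supp, ⟨⟨_, rfl⟩,
          ((H.connectedComponentMk a).mem_supp_iff a).2 rfl⟩, ?_⟩
        rintro s ⟨⟨c, rfl⟩, hs⟩
        rw [← (c.mem_supp_iff a).1 hs]
    have hconn : ∀ c : H.ConnectedComponent, (G.induce c.supp).Connected := by
      intro c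
      rw [connected_iff]
      constructor
      · rintro ⟨x, hx⟩ ⟨y, hy⟩
        have hrxy : H.Reachable x y := by
          have h1 := (c.mem_supp_iff x).1 hx
          have h2 := (c.mem_supp_iff y).1 hy
          exact SimpleGraph.ConnectedComponent.exact (h1.trans h2.symm)
        obtain ⟨w⟩ := hrxy
        have hsub : ∀ z ∈ w.support, z ∈ c.supp := by
          intro z hz
          have hrz : H.Reachable x z := ⟨w.takeUntil z hz⟩
          rw [SimpleGraph.ConnectedComponent.mem_supp_iff, ← (c.mem_supp_iff x).1 hx]
          exact SimpleGraph.ConnectedComponent.sound hrz.symm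
        exact reachable_induce_of_walk' hle w hsub
      · obtain ⟨w, hw⟩ := c.exists_rep
        exact ⟨⟨w, (c.mem_supp_iff w).2 hw⟩⟩
    refine ⟨⟨hpart, by rintro p ⟨c, rfl⟩; exact hconn c⟩, ?_⟩
    ext e
    induction e using Sym2.ind with
    | _ a b =>
    constructor
    · rintro ⟨heG, p, ⟨c, rfl⟩, hin⟩
      have ha := (c.mem_supp_iff a).1 (hin a (Sym2.mem_mk_left a b))
      have hb := (c.mem_supp_iff b).1 (hin b (Sym2.mem_mk_right a b))
      have hrab : H.Reachable a b :=
        SimpleGraph.ConnectedComponent.exact (ha.trans hb.symm)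
      exact mem_of_adj_reachable' hK ((G.mem_edgeSet).1 heG) hrab
    · intro heK
      have heG := hK.1 heK
      have hadj : G.Adj a b := (G.mem_edgeSet).1 heG
      have hH' : H.Adj a b := (fromEdgeSet_adj _).2 ⟨heK, hadj.ne⟩
      refine ⟨heG, (H.connectedComponentMk a).supp, ⟨_, rfl⟩, ?_⟩
      intro x hx
      rw [Sym2.mem_iff] at hx
      rcases hx with rfl | rfl
      · exact (SimpleGraph.ConnectedComponent.mem_supp_iff _ _).2 rfl
      · exact (SimpleGraph.ConnectedComponent.mem_supp_iff _ _).2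
          (SimpleGraph.ConnectedComponent.sound hH'.symm.reachable)
  · -- Part 2 : conn-pacs ↦ closed edge sets
    intro P hP
    obtain ⟨hpart, hconn⟩ := hP
    set H := SimpleGraph.fromEdgeSet (edgeSetOf G P) with hH
    have fwd : ∀ {x y : V}, H.Reachable x y → ∃ p ∈ P, x ∈ p ∧ y ∈ p := by
      intro x y hr
      obtain ⟨w⟩ := hr
      refine goodWalk' hpart w ?_
      intro f hf
      have h1 := w.edges_subset_edgeSet hf
      rw [hH, edgeSet_fromEdgeSet] at h1
      exact h1.1.2
    have bwd : ∀ p ∈ P, ∀ x ∈ p, ∀ y ∈ p, H.Reachable x y := by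
      intro p hp x hx y hy
      have hc := hconn p hp
      have hr : (G.induce p).Reachable ⟨x, hx⟩ ⟨y, hy⟩ := hc.preconnected _ _
      let f : G.induce p →g H := by
        refine ⟨Subtype.val, ?_⟩
        rintro ⟨a, hap⟩ ⟨c, hcp⟩ hac
        have hGac : G.Adj a c := hac
        rw [hH, fromEdgeSet_adj]
        refine ⟨⟨(G.mem_edgeSet).2 hGac, p, hp, ?_⟩, hGac.ne⟩
        intro z hz
        rw [Sym2.mem_iff] at hz
        rcases hz with rfl | rfl
        · exact hap
        · exact hcp
      exact hr.map f
    constructor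
    · refine ⟨fun e he => he.1, ?_⟩
      intro u c hcyc _ e he hsub
      obtain ⟨a, b, w1, w2, rfl, hsplit⟩ := exists_edge_split' c he
      have hnodup : c.edges.Nodup := hcyc.edges_nodup
      rw [hsplit] at hnodup
      rw [List.nodup_append] at hnodup
      obtain ⟨hn1, hn2, hn3⟩ := hnodup
      have hne1 : s(a, b) ∉ w1.edges := fun h => hn3 _ h _ List.mem_cons_self rfl
      have hne2 : s(a, b) ∉ w2.edges := (List.nodup_cons.1 hn2).1
      have hgood : ∀ f, (f ∈ w1.edges ∨ f ∈ w2.edges) → f ∈ edgeSetOf G P := by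
        intro f hf
        refine hsub ⟨?_, ?_⟩
        · show f ∈ c.edges
          rw [hsplit, List.mem_append, List.mem_cons]
          tauto
        · rintro rfl
          rcases hf with hf | hf
          · exact hne1 hf
          · exact hne2 hf
      obtain ⟨p, hp, hup, hap⟩ := goodWalk' hpart w1 (fun f hf => (hgood f (Or.inl hf)).2)
      obtain ⟨q, hq, hbq, huq⟩ := goodWalk' hpart w2 (fun f hf => (hgood f (Or.inr hf)).2)
      have hqp : q = p := part_eq' hpart hq hp huq hup
      refine ⟨c.edges_subset_edgeSet he, p, hp, ?_⟩
      intro x hx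
      rw [Sym2.mem_iff] at hx
      rcases hx with rfl | rfl
      · exact hap
      · exact hqp ▸ hbq
    · ext s
      constructor
      · rintro ⟨c, rfl⟩
        obtain ⟨v, hv⟩ := c.exists_rep
        obtain ⟨p, ⟨hp, hvp⟩, -⟩ := hpart.2 v
        have hsupp_eq : c.supp = p := by
          ext w
          rw [SimpleGraph.ConnectedComponent.mem_supp_iff, ← hv]
          constructor
          · intro hw
            obtain ⟨q, hq, hwq, hvq⟩ :=
              fwd (SimpleGraph.ConnectedComponent.exact hw)
            rw [← part_eq' hpart hq hp hvq hvp]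
            exact hwq
          · intro hw
            exact SimpleGraph.ConnectedComponent.sound (bwd p hp w hw v hvp)
        rw [hsupp_eq]; exact hp
      · intro hs
        have hne : s.Nonempty := by
          rcases Set.eq_empty_or_nonempty s with rfl | h
          · exact absurd hs hpart.1
          · exact h
        obtain ⟨v, hv⟩ := hne
        refine ⟨H.connectedComponentMk v, ?_⟩
        ext w
        rw [SimpleGraph.ConnectedComponent.mem_supp_iff]
        constructor
        · intro hw
          exact SimpleGraph.ConnectedComponent.sound (bwd s hs w hw v hv)
        · intro hw
          obtain ⟨q, hq, hwq, hvq⟩ :=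
            fwd (SimpleGraph.ConnectedComponent.exact hw)
          rw [← part_eq' hpart hq hs hvq hv]
          exact hwq
end
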